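/- Let b₁, b₂, u₁, u₂ ∈ ℝ³ with ‖b₁‖ = ‖b₂‖ = 1, b₁ ≠ b₂, b₁ ≠ −b₂, ⟨b₁, u₁⟩ = 0, ⟨b₂, u₂⟩ = 0, and ⟨b₂, u₁⟩ + ⟨b₁, u₂⟩ = 0. Then there exists ω ∈ ℝ³ such that b₁ ×₃ ω = −u₁ and b₂ ×₃ ω = −u₂. -/

import Mathlib

open scoped RealInnerProductSpace

noncomputable section

abbrev E3 := EuclideanSpace ℝ (Fin 3)

/-- The cross product on `ℝ³`. -/
def cross3 (x y : E3) : E3 :=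
  (EuclideanSpace.equiv (Fin 3) ℝ).symm
    ![x 1 * y 2 - x 2 * y 1, x 2 * y 0 - x 0 * y 2, x 0 * y 1 - x 1 * y 0]

/-!
For a unit vector `b` and `u ⊥ b`, every `ω = b ×₃ u + s • b` solves `b ×₃ ω = -u`. So it suffices
that `v = b₁ ×₃ u₁ - b₂ ×₃ u₂` lies in the span of `b₁, b₂`, i.e. is orthogonal to
`n = b₁ ×₃ b₂`, which is nonzero because `b₁ ≠ ±b₂`. By the Binet–Cauchy identity
`⟨v, n⟩ = ⟨b₂, u₁⟩ + ⟨b₁, u₂⟩ = 0`.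
-/

open Matrix WithLp

lemma cross3_eq_toLp (x y : E3) : cross3 x y = toLp 2 (ofLp x ⨯₃ ofLp y) := rfl

lemma inner_eq_dotProduct (x y : E3) : ⟪x, y⟫ = ofLp x ⬝ᵥ ofLp y := by
  rw [EuclideanSpace.inner_eq_star_dotProduct, star_trivial, dotProduct_comm]

lemma cross3_cross3 (a b c : E3) : cross3 a (cross3 b c) = ⟪a, c⟫ • b - ⟪b, a⟫ • c := by
  simp only [cross3_eq_toLp, inner_eq_dotProduct, cross_cross_eq_smul_sub_smul',
    toLp_sub, toLp_smul, toLp_ofLp]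

lemma cross3_cross3_left (a b c : E3) : cross3 (cross3 a b) c = ⟪a, c⟫ • b - ⟪b, c⟫ • a := by
  simp only [cross3_eq_toLp, inner_eq_dotProduct, cross_cross_eq_smul_sub_smul,
    toLp_sub, toLp_smul, toLp_ofLp]

lemma inner_cross3_cross3 (a b c d : E3) :
    ⟪cross3 a b, cross3 c d⟫ = ⟪a, c⟫ * ⟪b, d⟫ - ⟪a, d⟫ * ⟪b, c⟫ := by
  simp only [cross3_eq_toLp, inner_eq_dotProduct, cross_dot_cross]

lemma cross3_add_right (a x y : E3) : cross3 a (x + y) = cross3 a x + cross3 a y := by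
  simp only [cross3_eq_toLp, ofLp_add, map_add, toLp_add]

lemma cross3_sub_right (a x y : E3) : cross3 a (x - y) = cross3 a x - cross3 a y := by
  simp only [cross3_eq_toLp, ofLp_sub, map_sub, toLp_sub]

lemma cross3_smul_right (a x : E3) (r : ℝ) : cross3 a (r • x) = r • cross3 a x := by
  simp only [cross3_eq_toLp, ofLp_smul, map_smul, toLp_smul]

lemma cross3_self (a : E3) : cross3 a a = 0 := by
  simp only [cross3_eq_toLp, cross_self, toLp_zero]

lemma inner_cross3_self_smul_eq (a b v : E3) :
    ⟪cross3 a b, cross3 a b⟫ • v = ⟪v, cross3 a b⟫ • cross3 a b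
      + (⟪b, b⟫ * ⟪v, a⟫ - ⟪b, a⟫ * ⟪v, b⟫) • a + (⟪a, a⟫ * ⟪v, b⟫ - ⟪a, b⟫ * ⟪v, a⟫) • b := by
  have h := cross3_cross3 (cross3 a b) v (cross3 a b)
  rw [cross3_cross3 v a b, cross3_sub_right, cross3_smul_right, cross3_smul_right,
    cross3_cross3_left, cross3_cross3_left, real_inner_comm v a] at h
  linear_combination (norm := module) -h

lemma exists_eq_smul_add_smul_of_inner_cross3_eq_zero {a b v : E3} (hab : cross3 a b ≠ 0)
    (hv : ⟪v, cross3 a b⟫ = 0) : ∃ s t : ℝ, v = s • a + t • b := by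
  have hn : ⟪cross3 a b, cross3 a b⟫ ≠ 0 := inner_self_ne_zero.mpr hab
  refine ⟨(⟪b, b⟫ * ⟪v, a⟫ - ⟪b, a⟫ * ⟪v, b⟫) / ⟪cross3 a b, cross3 a b⟫,
    (⟪a, a⟫ * ⟪v, b⟫ - ⟪a, b⟫ * ⟪v, a⟫) / ⟪cross3 a b, cross3 a b⟫, ?_⟩
  apply smul_right_injective E3 hn
  simp only [inner_cross3_self_smul_eq a b v, hv, zero_smul, zero_add, smul_add, smul_smul,
    mul_div_cancel₀ _ hn]

lemma cross3_ne_zero_of_norm_eq_one {a b : E3} (ha : ‖a‖ = 1) (hb : ‖b‖ = 1) (hne : a ≠ b)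
    (hne' : a ≠ -b) : cross3 a b ≠ 0 := by
  intro h
  have h_ne_one : ⟪a, b⟫ ≠ 1 := fun h1 => hne ((inner_eq_one_iff_of_norm_eq_one ha hb).mp h1)
  have h_ne_neg_one : ⟪a, -b⟫ ≠ 1 := fun h1 =>
    hne' ((inner_eq_one_iff_of_norm_eq_one ha (by rwa [norm_neg])).mp h1)
  have hgram : (1 - ⟪a, b⟫) * (1 + ⟪a, b⟫) = 0 := by
    have := inner_cross3_cross3 a b a b
    rw [h, inner_zero_left, real_inner_self_eq_norm_sq, real_inner_self_eq_norm_sq, ha, hb,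
      real_inner_comm a b] at this
    linear_combination -this
  rw [inner_neg_right] at h_ne_neg_one
  rcases mul_eq_zero.mp hgram with h0 | h0
  · exact h_ne_one (by linarith)
  · exact h_ne_neg_one (by linarith)

lemma cross3_cross3_add_smul {b u : E3} (hb : ‖b‖ = 1) (hu : ⟪b, u⟫ = 0) (s : ℝ) :
    cross3 b (cross3 b u + s • b) = -u := by
  rw [cross3_add_right, cross3_smul_right, cross3_self, cross3_cross3, hu,
    real_inner_self_eq_norm_sq, hb]
  simp

/-- Existence of a common angular velocity `ω` annihilating the derivatives of two
body-frame bearings `b₁, b₂` with projected velocity contributions `u₁ ⊥ b₁`,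
`u₂ ⊥ b₂` satisfying the angle-preservation condition `⟨b₂,u₁⟩ + ⟨b₁,u₂⟩ = 0`. -/
theorem exists_common_angular_velocity
    (b₁ b₂ u₁ u₂ : E3)
    (hb₁ : ‖b₁‖ = 1) (hb₂ : ‖b₂‖ = 1)
    (hne : b₁ ≠ b₂) (hne' : b₁ ≠ -b₂)
    (hu₁ : ⟪b₁, u₁⟫ = 0) (hu₂ : ⟪b₂, u₂⟫ = 0)
    (hang : ⟪b₂, u₁⟫ + ⟪b₁, u₂⟫ = 0) :
    ∃ ω : E3, cross3 b₁ ω = -u₁ ∧ cross3 b₂ ω = -u₂ := by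
  have hv : ⟪cross3 b₁ u₁ - cross3 b₂ u₂, cross3 b₁ b₂⟫ = 0 := by
    simp only [inner_sub_left, inner_cross3_cross3, real_inner_comm _ u₁, real_inner_comm _ u₂]
    rw [hu₁, hu₂, real_inner_self_eq_norm_sq, real_inner_self_eq_norm_sq, hb₁, hb₂]
    linear_combination hang
  obtain ⟨s, t, hst⟩ := exists_eq_smul_add_smul_of_inner_cross3_eq_zero
    (cross3_ne_zero_of_norm_eq_one hb₁ hb₂ hne hne') hv
  have hω : cross3 b₁ u₁ + (-s) • b₁ = cross3 b₂ u₂ + t • b₂ := by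
    linear_combination (norm := module) hst
  exact ⟨_, cross3_cross3_add_smul hb₁ hu₁ (-s), hω ▸ cross3_cross3_add_smul hb₂ hu₂ t⟩
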